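/- Let W and U be finite-dimensional real inner product spaces with W nonzero and U nonzero, and let h : W × W → U be a symmetric bilinear map whose values span U. For ξ ∈ U, let S_ξ denote the self-adjoint endomorphism of W determined by ⟨S_ξ x, y⟩ = ⟨h(x,y), ξ⟩ for all x, y ∈ W. Let S be a set of skew-adjoint endomorphisms of W that acts irreducibly on W, and suppose that S_ξ ∘ S_η commutes with every element of S, for all ξ, η ∈ U. Then dim(U) ≤ dim{λ ∈ End(W) : λ commutes with every element of S}. -/
import Mathlib


open scoped RealInnerProductSpace

/-- The commutant of a set `S` of endomorphisms of `W`: all endomorphisms commuting with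
every element of `S`. -/
def commutantOf {W : Type*} [AddCommGroup W] [Module ℝ W]
    (S : Set (W →ₗ[ℝ] W)) : Submodule ℝ (W →ₗ[ℝ] W) where
  carrier := {l | ∀ f ∈ S, l ∘ₗ f = f ∘ₗ l}
  add_mem' := by
    intro a b ha hb f hf
    rw [LinearMap.add_comp, LinearMap.comp_add, ha f hf, hb f hf]
  zero_mem' := by
    intro f hf
    rw [LinearMap.zero_comp, LinearMap.comp_zero]
  smul_mem' := by
    intro c a ha f hf
    rw [LinearMap.smul_comp, LinearMap.comp_smul, ha f hf]

/-- Let `W`, `U` be nonzero finite-dimensional real inner product spaces and `h : W × W → U` a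
symmetric bilinear map whose values span `U`; let `S ξ` be the shape operator of `ξ ∈ U`.
Let `𝒮` be a set of skew-adjoint endomorphisms of `W` acting irreducibly on `W` such that
every `S ξ ∘ S η` commutes with every element of `𝒮`.  Then
`dim U ≤ dim {λ ∈ End(W) : λ commutes with every element of 𝒮}`. -/
theorem stmt_12 (W U : Type*)
    [NormedAddCommGroup W] [InnerProductSpace ℝ W] [FiniteDimensional ℝ W] [Nontrivial W]
    [NormedAddCommGroup U] [InnerProductSpace ℝ U] [FiniteDimensional ℝ U] [Nontrivial U]
    (h : W →ₗ[ℝ] W →ₗ[ℝ] U)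
    (hsymm : ∀ x y : W, h x y = h y x)
    (hspan : Submodule.span ℝ {u : U | ∃ x y : W, h x y = u} = ⊤)
    (S : U → (W →ₗ[ℝ] W))
    (hS : ∀ (ξ : U) (x y : W), ⟪S ξ x, y⟫ = ⟪h x y, ξ⟫)
    (𝒮 : Set (W →ₗ[ℝ] W))
    (h𝒮skew : ∀ f ∈ 𝒮, ∀ x y : W, ⟪f x, y⟫ = -⟪x, f y⟫)
    (hirr : ∀ p : Submodule ℝ W, (∀ f ∈ 𝒮, ∀ x ∈ p, f x ∈ p) → p = ⊥ ∨ p = ⊤)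
    (hcomm : ∀ ξ η : U, ∀ f ∈ 𝒮, (S ξ ∘ₗ S η) ∘ₗ f = f ∘ₗ (S ξ ∘ₗ S η)) :
    Module.finrank ℝ U ≤ Module.finrank ℝ (commutantOf 𝒮) := by
  -- S is determined by h, hence linear and "injective" in ξ when values span U.
  have hSadd : ∀ ξ η : U, S (ξ + η) = S ξ + S η := by
    intro ξ η; ext x; apply ext_inner_right ℝ; intro y
    simp [hS, inner_add_right, inner_add_left]
  have hSsmul : ∀ (c : ℝ) (ξ : U), S (c • ξ) = c • S ξ := by
    intro c ξ; ext x; apply ext_inner_right ℝ; intro y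
    simp [hS, inner_smul_right, real_inner_smul_left]
  have hSinj : ∀ ξ : U, S ξ = 0 → ξ = 0 := by
    intro ξ hξ
    have hperp : ∀ u ∈ Submodule.span ℝ {u : U | ∃ x y : W, h x y = u}, ⟪u, ξ⟫ = 0 := by
      intro u hu
      induction hu using Submodule.span_induction with
      | mem u hu =>
        obtain ⟨x, y, rfl⟩ := hu
        rw [← hS, hξ]; simp
      | zero => simp
      | add a b _ _ ha hb => rw [inner_add_left, ha, hb, add_zero]
      | smul c a _ ha => rw [real_inner_smul_left, ha, mul_zero]
    have := hperp ξ (by rw [hspan]; trivial)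
    exact inner_self_eq_zero.mp this
  have hSself : ∀ (ξ : U) (x y : W), ⟪S ξ x, y⟫ = ⟪S ξ y, x⟫ := by
    intro ξ x y; rw [hS, hS, hsymm, real_inner_comm]
  -- h is nonzero, so some S η₀ ≠ 0.
  obtain ⟨η₀, hη₀⟩ : ∃ η₀ : U, S η₀ ≠ 0 := by
    by_contra hc
    push_neg at hc
    obtain ⟨u, hu⟩ := exists_ne (0 : U)
    apply hu
    apply hSinj
    ext x; apply ext_inner_right ℝ; intro y
    rw [hS]
    have : h x y = 0 := by
      apply ext_inner_right ℝ; intro η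
      rw [← hS, hc η]; simp
    simp [this]
  -- S η₀ ∘ S η₀ is nonzero and lies in the commutant; by irreducibility it is injective.
  set g : W →ₗ[ℝ] W := S η₀ ∘ₗ S η₀ with hg
  have hgne : g ≠ 0 := by
    intro h0
    apply hη₀
    ext x
    have : ⟪S η₀ x, S η₀ x⟫ = 0 := by
      have : ⟪g x, x⟫ = 0 := by rw [h0]; simp
      rw [hg] at this
      rw [← this]
      simp only [LinearMap.comp_apply]
      rw [hSself η₀ (S η₀ x) x]
    simpa using inner_self_eq_zero.mp this
  have hinv : ∀ f ∈ 𝒮, ∀ x ∈ LinearMap.ker g, f x ∈ LinearMap.ker g := by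
    intro f hf x hx
    simp only [LinearMap.mem_ker] at hx ⊢
    have := congrArg (fun l => l x) (hcomm η₀ η₀ f hf)
    simp only [LinearMap.comp_apply] at this
    have h2 : g (f x) = f (g x) := this
    rw [h2, hx, map_zero]
  have hker : LinearMap.ker g = ⊥ := by
    rcases hirr (LinearMap.ker g) hinv with h1 | h1
    · exact h1
    · exfalso; apply hgne
      ext x
      have : x ∈ LinearMap.ker g := by rw [h1]; trivial
      simpa using this
  have hginj : Function.Injective g := by
    rwa [← LinearMap.ker_eq_bot]
  have hSη₀surj : Function.Surjective (S η₀) := by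
    have hinj : Function.Injective (S η₀) := by
      intro a b hab
      apply hginj
      simp only [hg, LinearMap.comp_apply, hab]
    exact (LinearMap.injective_iff_surjective).mp hinj
  -- The injective linear map ξ ↦ S ξ ∘ S η₀ into the commutant.
  let Φ : U →ₗ[ℝ] commutantOf 𝒮 :=
    { toFun := fun ξ => ⟨S ξ ∘ₗ S η₀, fun f hf => hcomm ξ η₀ f hf⟩
      map_add' := by
        intro ξ η
        apply Subtype.ext
        simp [hSadd, LinearMap.add_comp]
      map_smul' := by
        intro c ξ
        apply Subtype.ext
        simp [hSsmul, LinearMap.smul_comp] }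
  have hΦinj : Function.Injective Φ := by
    rw [← LinearMap.ker_eq_bot, Submodule.eq_bot_iff]
    intro ξ hξ
    simp only [LinearMap.mem_ker, Φ] at hξ
    have hξ' : S ξ ∘ₗ S η₀ = 0 := congrArg Subtype.val hξ
    apply hSinj
    ext x
    obtain ⟨y, rfl⟩ := hSη₀surj x
    have := congrArg (fun l => l y) hξ'
    simpa using this
  exact LinearMap.finrank_le_finrank_of_injective hΦinj
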